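/- arXiv:2303.15883 — 3 statements merged into one kernel-verified Lean document; each statement's English description precedes it below -/
import Mathlib

section
/- Let U ⊆ ℝⁿ be open, let π be a Poisson tensor on U, let W ⊆ U × ℝⁿ be open, and let α, β: W → U be smooth maps such that: α is a Poisson map from (W, Π_can) to (U, π); β is an anti-Poisson map from (W, Π_can) to (U, π); and {F∘α, G∘β}_can = 0 on W for all smooth F, G: U → ℝ. Let S: U → ℝ be a smooth function such that σ(x) := (x, ∇S(x)) lies in W for all x ∈ U and such that a := α∘σ and b := β∘σ are diffeomorphisms of U onto U. Then the map φ := b ∘ a⁻¹ : U → U is a Poisson diffeomorphism of (U, π), i.e. {F∘φ, G∘φ}_π = {F,G}_π ∘ φ for all smooth F,G: U → ℝ. -/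
open Matrix
open scoped BigOperators

/-- Partial derivative `∂f/∂x_i` of a function on `ℝⁿ`. -/
noncomputable def pd {n : ℕ} (f : (Fin n → ℝ) → ℝ) (i : Fin n) (x : Fin n → ℝ) : ℝ :=
  fderiv ℝ f x (Pi.single i 1)

/-- Gradient of a function on `ℝⁿ`. -/
noncomputable def grad {n : ℕ} (f : (Fin n → ℝ) → ℝ) (x : Fin n → ℝ) : Fin n → ℝ :=
  fun i => pd f i x

/-- The bracket `{f,g}(x) = (∇f(x))ᵀ π(x) ∇g(x)` of a matrix-valued map `π`. -/
noncomputable def bracket {n : ℕ} (π : (Fin n → ℝ) → Matrix (Fin n) (Fin n) ℝ)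
    (f g : (Fin n → ℝ) → ℝ) (x : Fin n → ℝ) : ℝ :=
  ∑ i, ∑ j, π x i j * pd f i x * pd g j x

/-- Partial derivative in the `i`-th base direction `x_i` on `ℝⁿ × ℝⁿ`. -/
noncomputable def pdx {n : ℕ} (F : (Fin n → ℝ) × (Fin n → ℝ) → ℝ) (i : Fin n)
    (z : (Fin n → ℝ) × (Fin n → ℝ)) : ℝ :=
  fderiv ℝ F z (Pi.single i 1, 0)

/-- Partial derivative in the `i`-th fiber direction `p_i` on `ℝⁿ × ℝⁿ`. -/
noncomputable def pdp {n : ℕ} (F : (Fin n → ℝ) × (Fin n → ℝ) → ℝ) (i : Fin n)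
    (z : (Fin n → ℝ) × (Fin n → ℝ)) : ℝ :=
  fderiv ℝ F z (0, Pi.single i 1)

/-- Canonical Poisson bracket on `ℝⁿ × ℝⁿ`:
`{F,G}(x,p) = ∑ᵢ (∂F/∂xᵢ ∂G/∂pᵢ − ∂F/∂pᵢ ∂G/∂xᵢ)`. -/
noncomputable def canBracket {n : ℕ} (F G : (Fin n → ℝ) × (Fin n → ℝ) → ℝ)
    (z : (Fin n → ℝ) × (Fin n → ℝ)) : ℝ :=
  ∑ i, (pdx F i z * pdp G i z - pdp F i z * pdx G i z)

/-- A Poisson tensor on an open set `U ⊆ ℝⁿ`. -/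
def IsPoissonTensor {n : ℕ} (π : (Fin n → ℝ) → Matrix (Fin n) (Fin n) ℝ)
    (U : Set (Fin n → ℝ)) : Prop :=
  (∀ x ∈ U, (π x)ᵀ = -π x) ∧
  ∀ i j k : Fin n, ∀ x ∈ U,
    ∑ a, (pd (fun y => π y i j) a x * π x a k
        + pd (fun y => π y j k) a x * π x a i
        + pd (fun y => π y k i) a x * π x a j) = 0

/-! The Jacobian of `φ = b ∘ a⁻¹` is `Db Da⁻¹`, where `Da = Aₓ + Aₚ H` and `Db = Bₓ + Bₚ H` are
the Jacobians of `α` and `β` restricted to the graph of `∇S`, with `H` the (symmetric) Hessian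
of `S`. The hypotheses on `α` and `β` say that the canonical pairings of their Jacobian blocks
are `π`, `-π` and `0`; since the graph of `∇S` is Lagrangian these pairings survive the
restriction, and a short matrix computation then gives `Dφ π Dφᵀ = π ∘ φ`, which is exactly
invariance of the bracket. -/

section Jacobians

variable {n m k : ℕ}

noncomputable def jac (g : (Fin n → ℝ) → Fin m → ℝ) (x : Fin n → ℝ) : Matrix (Fin m) (Fin n) ℝ :=
  LinearMap.toMatrix' (fderiv ℝ g x : (Fin n → ℝ) →ₗ[ℝ] Fin m → ℝ)

noncomputable def jacX (α : (Fin n → ℝ) × (Fin n → ℝ) → Fin m → ℝ)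
    (z : (Fin n → ℝ) × (Fin n → ℝ)) : Matrix (Fin m) (Fin n) ℝ :=
  LinearMap.toMatrix' ((fderiv ℝ α z).comp (.inl ℝ _ _) : (Fin n → ℝ) →ₗ[ℝ] Fin m → ℝ)

noncomputable def jacP (α : (Fin n → ℝ) × (Fin n → ℝ) → Fin m → ℝ)
    (z : (Fin n → ℝ) × (Fin n → ℝ)) : Matrix (Fin m) (Fin n) ℝ :=
  LinearMap.toMatrix' ((fderiv ℝ α z).comp (.inr ℝ _ _) : (Fin n → ℝ) →ₗ[ℝ] Fin m → ℝ)

/-- The matrix of canonical brackets `{αᵢ, βⱼ}_can`, cf. `canPairing_apply`. -/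
noncomputable def canPairing (α : (Fin n → ℝ) × (Fin n → ℝ) → Fin m → ℝ)
    (β : (Fin n → ℝ) × (Fin n → ℝ) → Fin k → ℝ) (z : (Fin n → ℝ) × (Fin n → ℝ)) :
    Matrix (Fin m) (Fin k) ℝ :=
  jacX α z * (jacP β z)ᵀ - jacP α z * (jacX β z)ᵀ

lemma fderiv_apply_eq_grad_dotProduct (f : (Fin n → ℝ) → ℝ) (x v : Fin n → ℝ) :
    fderiv ℝ f x v = grad f x ⬝ᵥ v := by
  conv_lhs => rw [← Finset.univ_sum_single v]
  refine (map_sum _ _ _).trans (Finset.sum_congr rfl fun i _ => ?_)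
  rw [show Pi.single i (v i) = v i • (Pi.single i 1 : Fin n → ℝ) by
    rw [← Pi.single_smul', smul_eq_mul, mul_one], map_smul, smul_eq_mul, mul_comm]
  rfl

lemma grad_comp {f : (Fin m → ℝ) → ℝ} {g : (Fin n → ℝ) → Fin m → ℝ} {x : Fin n → ℝ}
    (hf : DifferentiableAt ℝ f (g x)) (hg : DifferentiableAt ℝ g x) :
    grad (f ∘ g) x = grad f (g x) ᵥ* jac g x := by
  ext i
  simp only [grad, pd, fderiv_comp x hf hg, ContinuousLinearMap.coe_comp, Function.comp_apply,
    fderiv_apply_eq_grad_dotProduct f]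
  rfl

lemma jac_comp {f : (Fin n → ℝ) → Fin m → ℝ} {g : (Fin m → ℝ) → Fin k → ℝ} {x : Fin n → ℝ}
    (hg : DifferentiableAt ℝ g (f x)) (hf : DifferentiableAt ℝ f x) :
    jac (g ∘ f) x = jac g (f x) * jac f x := by
  rw [jac, fderiv_comp x hg hf]
  exact LinearMap.toMatrix'_comp _ _

lemma jac_mul_jac_eq_one_of_leftInverse {f g : (Fin n → ℝ) → Fin n → ℝ} {y : Fin n → ℝ}
    (hg : DifferentiableAt ℝ g (f y)) (hf : DifferentiableAt ℝ f y)
    (hgf : g ∘ f =ᶠ[nhds y] id) :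
    jac g (f y) * jac f y = 1 := by
  rw [← jac_comp hg hf, jac, hgf.fderiv_eq, fderiv_id]
  exact LinearMap.toMatrix'_id

lemma jac_graph {α : (Fin n → ℝ) × (Fin n → ℝ) → Fin m → ℝ} {ψ : (Fin n → ℝ) → Fin n → ℝ}
    {y : Fin n → ℝ} (hα : DifferentiableAt ℝ α (y, ψ y)) (hψ : DifferentiableAt ℝ ψ y) :
    jac (fun v => α (v, ψ v)) y = jacX α (y, ψ y) + jacP α (y, ψ y) * jac ψ y := by
  have hσ : HasFDerivAt (fun v => (v, ψ v))
      ((ContinuousLinearMap.id ℝ _).prod (fderiv ℝ ψ y)) y :=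
    (hasFDerivAt_id y).prodMk hψ.hasFDerivAt
  have hασ := (hα.hasFDerivAt.comp y hσ).fderiv
  rw [Function.comp_def] at hασ
  rw [jac, hασ, jacX, jacP, jac, ← LinearMap.toMatrix'_comp, ← map_add]
  congr 1
  ext v i
  simp only [ContinuousLinearMap.toLinearMap_comp, LinearMap.coe_comp, Function.comp_apply,
    ContinuousLinearMap.coe_coe, ContinuousLinearMap.prod_apply, ContinuousLinearMap.coe_id',
    id_eq, LinearMap.add_apply, ContinuousLinearMap.inl_apply, ContinuousLinearMap.inr_apply,
    Pi.add_apply]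
  rw [← Pi.add_apply, ← map_add, Prod.mk_add_mk, add_zero, zero_add]

lemma canPairing_apply {α : (Fin n → ℝ) × (Fin n → ℝ) → Fin m → ℝ}
    {β : (Fin n → ℝ) × (Fin n → ℝ) → Fin k → ℝ} {z : (Fin n → ℝ) × (Fin n → ℝ)}
    (hα : DifferentiableAt ℝ α z) (hβ : DifferentiableAt ℝ β z) (i : Fin m) (j : Fin k) :
    canPairing α β z i j = canBracket (fun w => α w i) (fun w => β w j) z := by
  simp [canPairing, canBracket, pdx, pdp, fderiv_apply hα, fderiv_apply hβ, jacX, jacP,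
    Matrix.mul_apply, Finset.sum_sub_distrib]

lemma canPairing_eq_of_canBracket {α : (Fin n → ℝ) × (Fin n → ℝ) → Fin m → ℝ}
    {β : (Fin n → ℝ) × (Fin n → ℝ) → Fin k → ℝ} {z : (Fin n → ℝ) × (Fin n → ℝ)}
    {R : Matrix (Fin m) (Fin k) ℝ} (hα : DifferentiableAt ℝ α z) (hβ : DifferentiableAt ℝ β z)
    (h : ∀ i j, canBracket (fun w => α w i) (fun w => β w j) z = R i j) :
    canPairing α β z = R :=
  Matrix.ext fun i j => (canPairing_apply hα hβ i j).trans (h i j)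

end Jacobians

section Hessian

variable {n : ℕ} {S : (Fin n → ℝ) → ℝ} {y : Fin n → ℝ}

lemma hasFDerivAt_grad (hS : DifferentiableAt ℝ (fderiv ℝ S) y) :
    HasFDerivAt (grad S)
      ((ContinuousLinearMap.pi fun i => ContinuousLinearMap.apply ℝ ℝ (Pi.single i 1)).comp
        (fderiv ℝ (fderiv ℝ S) y)) y := by
  exact (ContinuousLinearMap.pi fun i =>
    ContinuousLinearMap.apply ℝ ℝ (Pi.single i 1)).hasFDerivAt.comp y hS.hasFDerivAt

lemma differentiableAt_fderiv_of_contDiffAt_two (hS : ContDiffAt ℝ 2 S y) :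
    DifferentiableAt ℝ (fderiv ℝ S) y :=
  (hS.fderiv_right (m := 1) (by norm_num)).differentiableAt one_ne_zero

lemma differentiableAt_grad (hS : ContDiffAt ℝ 2 S y) : DifferentiableAt ℝ (grad S) y :=
  (hasFDerivAt_grad (differentiableAt_fderiv_of_contDiffAt_two hS)).differentiableAt

lemma jac_grad_transpose (hS : ContDiffAt ℝ 2 S y) : (jac (grad S) y)ᵀ = jac (grad S) y := by
  have hsymm : IsSymmSndFDerivAt ℝ S y := hS.isSymmSndFDerivAt (by simp)
  ext k j
  simp [jac, (hasFDerivAt_grad (differentiableAt_fderiv_of_contDiffAt_two hS)).fderiv,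
    hsymm (Pi.single k 1)]

end Hessian

section Bracket

variable {n : ℕ} (π : (Fin n → ℝ) → Matrix (Fin n) (Fin n) ℝ)

lemma bracket_eq_dotProduct (f g : (Fin n → ℝ) → ℝ) (x : Fin n → ℝ) :
    bracket π f g x = grad f x ⬝ᵥ π x *ᵥ grad g x := by
  simp only [bracket, dotProduct, mulVec, Finset.mul_sum]
  refine Finset.sum_congr rfl fun i _ => Finset.sum_congr rfl fun j _ => ?_
  simp only [grad]
  ring

lemma bracket_coord (i j : Fin n) (x : Fin n → ℝ) :
    bracket π (fun v => v i) (fun v => v j) x = π x i j := by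
  have hgrad : ∀ k, grad (fun v : Fin n → ℝ => v k) x = Pi.single k 1 := fun k => by
    ext l
    simp [grad, pd, (hasFDerivAt_apply k x).fderiv, Pi.single_apply, eq_comm]
  simp [bracket_eq_dotProduct, hgrad]

variable {π}

lemma bracket_comp_of_jac_conj {f g : (Fin n → ℝ) → ℝ} {φ : (Fin n → ℝ) → Fin n → ℝ}
    {x : Fin n → ℝ} (hf : DifferentiableAt ℝ f (φ x)) (hg : DifferentiableAt ℝ g (φ x))
    (hφ : DifferentiableAt ℝ φ x) (hconj : jac φ x * π x * (jac φ x)ᵀ = π (φ x)) :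
    bracket π (f ∘ φ) (g ∘ φ) x = bracket π f g (φ x) := by
  rw [bracket_eq_dotProduct, bracket_eq_dotProduct, grad_comp hf hφ, grad_comp hg hφ, ← hconj,
    ← mulVec_transpose (jac φ x) (grad g (φ x)), mulVec_mulVec, ← dotProduct_mulVec,
    mulVec_mulVec, Matrix.mul_assoc]

end Bracket

section Pairing

/-- The graph of a symmetric `H` is Lagrangian: replacing the position blocks `X, X'` by
`X + P H, X' + P' H` does not change the canonical pairing `X P'ᵀ - P X'ᵀ`. -/
lemma pairing_add_mul_symm {R : Type*} [CommRing R] {k l m : Type*} [Fintype m]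
    {H : Matrix m m R} (hH : Hᵀ = H) (X P : Matrix k m R) (X' P' : Matrix l m R) :
    (X + P * H) * P'ᵀ - P * (X' + P' * H)ᵀ = X * P'ᵀ - P * X'ᵀ := by
  rw [transpose_add, transpose_mul, hH, Matrix.add_mul, Matrix.mul_add, Matrix.mul_assoc]
  abel

lemma conj_eq_of_pairing {R : Type*} [CommRing R] {k l m : Type*} [Fintype k] [Fintype m]
    [DecidableEq m] {Da Ap : Matrix k m R} {Db Bp : Matrix l m R} {A' : Matrix m k R}
    {P : Matrix k k R} {Q : Matrix l l R} (hinv : A' * Da = 1)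
    (hP : Da * Apᵀ - Ap * Daᵀ = P) (hQ : Db * Bpᵀ - Bp * Dbᵀ = -Q)
    (hAB : Da * Bpᵀ - Ap * Dbᵀ = 0) :
    (Db * A') * P * (Db * A')ᵀ = Q := by
  have hA'Ap : A' * Ap * Dbᵀ = Bpᵀ := by
    rw [Matrix.mul_assoc, ← sub_eq_zero.mp hAB, ← Matrix.mul_assoc, hinv, Matrix.one_mul]
  have hA'ApT : Db * Apᵀ * A'ᵀ * Dbᵀ = Bp * Dbᵀ := by
    simpa [transpose_mul, Matrix.mul_assoc] using congrArg transpose (congrArg (Db * ·) hA'Ap)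
  have hcancel : ∀ X : Matrix m l R, A' * (Da * X) = X := fun X => by
    rw [← Matrix.mul_assoc, hinv, Matrix.one_mul]
  have hcancelT : ∀ X : Matrix m l R, Daᵀ * (A'ᵀ * X) = X := fun X => by
    rw [← Matrix.mul_assoc, ← transpose_mul, hinv, transpose_one, Matrix.one_mul]
  calc (Db * A') * P * (Db * A')ᵀ
      = Db * Apᵀ * A'ᵀ * Dbᵀ - Db * (A' * Ap * Dbᵀ) := by
        simp only [← hP, transpose_mul, Matrix.mul_sub, Matrix.sub_mul, Matrix.mul_assoc,
          hcancel, hcancelT]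
    _ = Q := by rw [hA'ApT, hA'Ap, ← neg_sub, hQ, neg_neg]

lemma jac_conj_of_canPairing {n k l : ℕ} {α : (Fin n → ℝ) × (Fin n → ℝ) → Fin k → ℝ}
    {β : (Fin n → ℝ) × (Fin n → ℝ) → Fin l → ℝ} {ψ : (Fin n → ℝ) → Fin n → ℝ}
    {y : Fin n → ℝ} {A' : Matrix (Fin n) (Fin k) ℝ} {P : Matrix (Fin k) (Fin k) ℝ}
    {Q : Matrix (Fin l) (Fin l) ℝ}
    (hα : DifferentiableAt ℝ α (y, ψ y)) (hβ : DifferentiableAt ℝ β (y, ψ y))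
    (hψ : DifferentiableAt ℝ ψ y) (hψsymm : (jac ψ y)ᵀ = jac ψ y)
    (hP : canPairing α α (y, ψ y) = P) (hQ : canPairing β β (y, ψ y) = -Q)
    (hαβ : canPairing α β (y, ψ y) = 0) (hinv : A' * jac (fun v => α (v, ψ v)) y = 1) :
    jac (fun v => β (v, ψ v)) y * A' * P * (jac (fun v => β (v, ψ v)) y * A')ᵀ = Q := by
  rw [jac_graph hα hψ] at hinv
  rw [jac_graph hβ hψ]
  refine conj_eq_of_pairing (Ap := jacP α (y, ψ y)) (Bp := jacP β (y, ψ y)) hinv ?_ ?_ ?_ <;>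
     rwa [pairing_add_mul_symm hψsymm]

end Pairing

theorem bisection_induces_poisson_diffeo_general
    {n : ℕ} (U : Set (Fin n → ℝ)) (hU : IsOpen U)
    (π : (Fin n → ℝ) → Matrix (Fin n) (Fin n) ℝ)
    (W : Set ((Fin n → ℝ) × (Fin n → ℝ))) (hW : IsOpen W)
    (α β : (Fin n → ℝ) × (Fin n → ℝ) → (Fin n → ℝ))
    (hα : ContDiffOn ℝ (⊤ : ℕ∞) α W) (hβ : ContDiffOn ℝ (⊤ : ℕ∞) β W)
    -- `α` is a Poisson map
    (hαP : ∀ F G : (Fin n → ℝ) → ℝ,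
      ContDiffOn ℝ (⊤ : ℕ∞) F U → ContDiffOn ℝ (⊤ : ℕ∞) G U →
      ∀ w ∈ W, canBracket (F ∘ α) (G ∘ α) w = bracket π F G (α w))
    -- `β` is an anti-Poisson map
    (hβP : ∀ F G : (Fin n → ℝ) → ℝ,
      ContDiffOn ℝ (⊤ : ℕ∞) F U → ContDiffOn ℝ (⊤ : ℕ∞) G U →
      ∀ w ∈ W, canBracket (F ∘ β) (G ∘ β) w = -bracket π F G (β w))
    -- the fibers of `α` and `β` are symplectically orthogonal
    (hαβ : ∀ F G : (Fin n → ℝ) → ℝ,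
      ContDiffOn ℝ (⊤ : ℕ∞) F U → ContDiffOn ℝ (⊤ : ℕ∞) G U →
      ∀ w ∈ W, canBracket (F ∘ α) (G ∘ β) w = 0)
    (S : (Fin n → ℝ) → ℝ) (hS : ContDiffOn ℝ (⊤ : ℕ∞) S U)
    (hσ : ∀ x ∈ U, (x, grad S x) ∈ W)
    -- `a := α ∘ σ` and `b := β ∘ σ` are diffeomorphisms of `U` onto `U`
    (a b ainv : (Fin n → ℝ) → (Fin n → ℝ))
    (ha : ∀ x, a x = α (x, grad S x)) (hb : ∀ x, b x = β (x, grad S x))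
    (hbU : Set.MapsTo b U U)
    (hainvU : Set.MapsTo ainv U U)
    (hainv : ContDiffOn ℝ (⊤ : ℕ∞) ainv U)
    (haainv : ∀ x ∈ U, ainv (a x) = x) (hainva : ∀ x ∈ U, a (ainv x) = x) :
    ∀ F G : (Fin n → ℝ) → ℝ,
      ContDiffOn ℝ (⊤ : ℕ∞) F U → ContDiffOn ℝ (⊤ : ℕ∞) G U →
      ∀ x ∈ U,
        bracket π (F ∘ b ∘ ainv) (G ∘ b ∘ ainv) x = bracket π F G (b (ainv x)) := by
  intro F G hF hG x hx
  set y := ainv x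
  have hy : y ∈ U := hainvU hx
  have hz : (y, grad S y) ∈ W := hσ y hy
  have hay : a y = x := hainva x hx
  have hS2 : ContDiffAt ℝ 2 S y :=
    (hS.contDiffAt (hU.mem_nhds hy)).of_le (WithTop.coe_le_coe.mpr le_top)
  have hgrad := differentiableAt_grad hS2
  have hαz := (hα.differentiableOn (by simp)).differentiableAt (hW.mem_nhds hz)
  have hβz := (hβ.differentiableOn (by simp)).differentiableAt (hW.mem_nhds hz)
  have hainvx := (hainv.differentiableOn (by simp)).differentiableAt (hU.mem_nhds hx)
  have hcoord (i : Fin n) : ContDiffOn ℝ (⊤ : ℕ∞) (fun v : Fin n → ℝ => v i) U :=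
    (contDiff_apply ℝ ℝ i).contDiffOn
  have hαα := canPairing_eq_of_canBracket (R := π _) hαz hαz fun i j => by
    rw [← bracket_coord π i j]; exact hαP _ _ (hcoord i) (hcoord j) _ hz
  have hββ := canPairing_eq_of_canBracket (R := -π _) hβz hβz fun i j => by
    rw [Matrix.neg_apply, ← bracket_coord π i j]; exact hβP _ _ (hcoord i) (hcoord j) _ hz
  have hαβz := canPairing_eq_of_canBracket (R := 0) hαz hβz fun i j =>
    hαβ _ _ (hcoord i) (hcoord j) _ hz
  have ha' : a = fun v => α (v, grad S v) := funext ha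
  have hb' : b = fun v => β (v, grad S v) := funext hb
  have hadiff : DifferentiableAt ℝ a y := ha' ▸ hαz.comp y (differentiableAt_id.prodMk hgrad)
  have hbdiff : DifferentiableAt ℝ b y := hb' ▸ hβz.comp y (differentiableAt_id.prodMk hgrad)
  have hinv := jac_mul_jac_eq_one_of_leftInverse (hay ▸ hainvx) hadiff
    (Filter.eventually_of_mem (hU.mem_nhds hy) haainv)
  rw [hay, ha'] at hinv
  have hconj := jac_conj_of_canPairing hαz hβz hgrad (jac_grad_transpose hS2) hαα hββ hαβz hinv
  rw [← ha, ← hb, ← hb', ← jac_comp hbdiff hainvx, hay] at hconj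
  exact bracket_comp_of_jac_conj ((hF.differentiableOn (by simp)).differentiableAt
    (hU.mem_nhds (hbU hy))) ((hG.differentiableOn (by simp)).differentiableAt
    (hU.mem_nhds (hbU hy))) (hbdiff.comp x hainvx) hconj

/-- Given a bi-realisation `(W, α, β)` of `(U, π)` and a smooth
function `S` whose differential graph `σ(x) = (x, ∇S(x))` is a bisection (i.e.
`a = α∘σ` and `b = β∘σ` are diffeomorphisms of `U` onto `U`), the induced map
`φ = b ∘ a⁻¹` is a Poisson diffeomorphism of `(U, π)`. -/
theorem bisection_induces_poisson_diffeo
    {n : ℕ} (U : Set (Fin n → ℝ)) (hU : IsOpen U)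
    (π : (Fin n → ℝ) → Matrix (Fin n) (Fin n) ℝ)
    (hπsmooth : ∀ i j, ContDiffOn ℝ (⊤ : ℕ∞) (fun x => π x i j) U)
    (hπ : IsPoissonTensor π U)
    (W : Set ((Fin n → ℝ) × (Fin n → ℝ))) (hW : IsOpen W)
    (hWU : W ⊆ U ×ˢ Set.univ)
    (α β : (Fin n → ℝ) × (Fin n → ℝ) → (Fin n → ℝ))
    (hα : ContDiffOn ℝ (⊤ : ℕ∞) α W) (hβ : ContDiffOn ℝ (⊤ : ℕ∞) β W)
    (hαU : Set.MapsTo α W U) (hβU : Set.MapsTo β W U)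
    -- `α` is a Poisson map
    (hαP : ∀ F G : (Fin n → ℝ) → ℝ,
      ContDiffOn ℝ (⊤ : ℕ∞) F U → ContDiffOn ℝ (⊤ : ℕ∞) G U →
      ∀ w ∈ W, canBracket (F ∘ α) (G ∘ α) w = bracket π F G (α w))
    -- `β` is an anti-Poisson map
    (hβP : ∀ F G : (Fin n → ℝ) → ℝ,
      ContDiffOn ℝ (⊤ : ℕ∞) F U → ContDiffOn ℝ (⊤ : ℕ∞) G U →
      ∀ w ∈ W, canBracket (F ∘ β) (G ∘ β) w = -bracket π F G (β w))
    -- the fibers of `α` and `β` are symplectically orthogonal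
    (hαβ : ∀ F G : (Fin n → ℝ) → ℝ,
      ContDiffOn ℝ (⊤ : ℕ∞) F U → ContDiffOn ℝ (⊤ : ℕ∞) G U →
      ∀ w ∈ W, canBracket (F ∘ α) (G ∘ β) w = 0)
    (S : (Fin n → ℝ) → ℝ) (hS : ContDiffOn ℝ (⊤ : ℕ∞) S U)
    (hσ : ∀ x ∈ U, (x, grad S x) ∈ W)
    -- `a := α ∘ σ` and `b := β ∘ σ` are diffeomorphisms of `U` onto `U`
    (a b ainv binv : (Fin n → ℝ) → (Fin n → ℝ))
    (ha : ∀ x, a x = α (x, grad S x)) (hb : ∀ x, b x = β (x, grad S x))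
    (haU : Set.MapsTo a U U) (hbU : Set.MapsTo b U U)
    (hainvU : Set.MapsTo ainv U U) (hbinvU : Set.MapsTo binv U U)
    (hainv : ContDiffOn ℝ (⊤ : ℕ∞) ainv U) (hbinv : ContDiffOn ℝ (⊤ : ℕ∞) binv U)
    (haainv : ∀ x ∈ U, ainv (a x) = x) (hainva : ∀ x ∈ U, a (ainv x) = x)
    (hbbinv : ∀ x ∈ U, binv (b x) = x) (hbinvb : ∀ x ∈ U, b (binv x) = x) :
    ∀ F G : (Fin n → ℝ) → ℝ,
      ContDiffOn ℝ (⊤ : ℕ∞) F U → ContDiffOn ℝ (⊤ : ℕ∞) G U →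
      ∀ x ∈ U,
        bracket π (F ∘ b ∘ ainv) (G ∘ b ∘ ainv) x = bracket π F G (b (ainv x)) :=
  bisection_induces_poisson_diffeo_general U hU π W hW α β hα hβ hαP hβP hαβ S hS hσ a b ainv ha hb
    hbU hainvU hainv haainv hainva
end

section
/- Let n ≥ 1 and consider W = ℝ^{4n} with coordinates (q, p, ξ_q, ξ_p) ∈ ℝⁿ×ℝⁿ×ℝⁿ×ℝⁿ, equipped with the constant Poisson bracket determined by {q_i, ξ_{q,j}} = δ_{ij}, {p_i, ξ_{p,j}} = δ_{ij}, all other coordinate brackets being zero. Let U = ℝ^{2n} with coordinates (q,p) carry the constant Poisson bracket determined by {q_i, p_j} = δ_{ij}. Then the maps α(q,p,ξ_q,ξ_p) = (q − ξ_p/2, p + ξ_q/2) and β(q,p,ξ_q,ξ_p) = (q + ξ_p/2, p − ξ_q/2) from W to U satisfy: α is a Poisson map, β is an anti-Poisson map, and {F∘α, G∘β}_W = 0 for all smooth F, G: U → ℝ. -/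
open scoped BigOperators

section

variable {n : ℕ}

/-- Phase space `ℝ^{2n}` with coordinates `(q,p)`. -/
abbrev Phase (n : ℕ) := (Fin n → ℝ) × (Fin n → ℝ)

/-- Doubled space `ℝ^{4n}` with coordinates `(q,p,ξ_q,ξ_p)`. -/
abbrev Doubled (n : ℕ) := ((Fin n → ℝ) × (Fin n → ℝ)) × ((Fin n → ℝ) × (Fin n → ℝ))

/-- Canonical Poisson bracket on `ℝ^{2n}`, with `{q_i, p_j} = δ_{ij}`. -/
noncomputable def brU (F G : Phase n → ℝ) (z : Phase n) : ℝ :=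
  ∑ i, (fderiv ℝ F z (Pi.single i 1, 0) * fderiv ℝ G z (0, Pi.single i 1)
      - fderiv ℝ F z (0, Pi.single i 1) * fderiv ℝ G z (Pi.single i 1, 0))

/-- Constant Poisson bracket on `ℝ^{4n}` determined by `{q_i, ξ_{q,j}} = δ_{ij}`,
`{p_i, ξ_{p,j}} = δ_{ij}`, all other coordinate brackets vanishing. -/
noncomputable def brW (F G : Doubled n → ℝ) (w : Doubled n) : ℝ :=
  ∑ i, (fderiv ℝ F w ((Pi.single i 1, 0), (0, 0))
          * fderiv ℝ G w ((0, 0), (Pi.single i 1, 0))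
      - fderiv ℝ F w ((0, 0), (Pi.single i 1, 0))
          * fderiv ℝ G w ((Pi.single i 1, 0), (0, 0)))
  + ∑ i, (fderiv ℝ F w ((0, Pi.single i 1), (0, 0))
          * fderiv ℝ G w ((0, 0), (0, Pi.single i 1))
      - fderiv ℝ F w ((0, 0), (0, Pi.single i 1))
          * fderiv ℝ G w ((0, Pi.single i 1), (0, 0)))

/-- Source map `α(q,p,ξ_q,ξ_p) = (q − ξ_p/2, p + ξ_q/2)`. -/
noncomputable def srcMap (w : Doubled n) : Phase n :=
  (w.1.1 - (1 / 2 : ℝ) • w.2.2, w.1.2 + (1 / 2 : ℝ) • w.2.1)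

/-- Target map `β(q,p,ξ_q,ξ_p) = (q + ξ_p/2, p − ξ_q/2)`. -/
noncomputable def tgtMap (w : Doubled n) : Phase n :=
  (w.1.1 + (1 / 2 : ℝ) • w.2.2, w.1.2 - (1 / 2 : ℝ) • w.2.1)

end

/-!
Both maps are linear, so by the chain rule the differential of `F ∘ α` at `w` is the covector
`dF(α w)` pulled back along `α`, and likewise for `β`. Each bracket is the constant bivector of
its space evaluated on two covectors, so the theorem reduces to three identities between the
bivector of `ℝ^{4n}` on pulled-back covectors and the bivector of `ℝ^{2n}`; in each of them
the two factors `1/2` coming from `ξ_q` and `ξ_p` add up to `1`, to `-1`, or cancel.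
-/

section

variable {n : ℕ}

noncomputable def srcMapL (n : ℕ) : Doubled n →L[ℝ] Phase n :=
  LinearMap.toContinuousLinearMap
    { toFun := srcMap
      map_add' x y := by
        refine Prod.ext ?_ ?_ <;> simp only [srcMap, Prod.fst_add, Prod.snd_add] <;> module
      map_smul' c x := by
        refine Prod.ext ?_ ?_ <;>
          simp only [srcMap, Prod.smul_fst, Prod.smul_snd, RingHom.id_apply] <;> module }

noncomputable def tgtMapL (n : ℕ) : Doubled n →L[ℝ] Phase n :=
  LinearMap.toContinuousLinearMap
    { toFun := tgtMap
      map_add' x y := by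
        refine Prod.ext ?_ ?_ <;> simp only [tgtMap, Prod.fst_add, Prod.snd_add] <;> module
      map_smul' c x := by
        refine Prod.ext ?_ ?_ <;>
          simp only [tgtMap, Prod.smul_fst, Prod.smul_snd, RingHom.id_apply] <;> module }

@[simp] lemma coe_srcMapL : ⇑(srcMapL n) = srcMap := rfl

@[simp] lemma coe_tgtMapL : ⇑(tgtMapL n) = tgtMap := rfl

lemma fderiv_comp_continuousLinearMap {𝕜 E F G : Type*} [NontriviallyNormedField 𝕜]
    [NormedAddCommGroup E] [NormedSpace 𝕜 E] [NormedAddCommGroup F] [NormedSpace 𝕜 F]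
    [NormedAddCommGroup G] [NormedSpace 𝕜 G] {f : F → G} (L : E →L[𝕜] F) {x : E}
    (hf : DifferentiableAt 𝕜 f (L x)) :
    fderiv 𝕜 (f ∘ L) x = (fderiv 𝕜 f (L x)).comp L := by
  rw [fderiv_comp x hf L.differentiableAt, L.fderiv]

def bivectorU (a b : Phase n →L[ℝ] ℝ) : ℝ :=
  ∑ i, (a (Pi.single i 1, 0) * b (0, Pi.single i 1)
      - a (0, Pi.single i 1) * b (Pi.single i 1, 0))

def bivectorW (a b : Doubled n →L[ℝ] ℝ) : ℝ :=
  ∑ i, (a ((Pi.single i 1, 0), (0, 0)) * b ((0, 0), (Pi.single i 1, 0))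
      - a ((0, 0), (Pi.single i 1, 0)) * b ((Pi.single i 1, 0), (0, 0)))
  + ∑ i, (a ((0, Pi.single i 1), (0, 0)) * b ((0, 0), (0, Pi.single i 1))
      - a ((0, 0), (0, Pi.single i 1)) * b ((0, Pi.single i 1), (0, 0)))

lemma brU_eq_bivectorU (F G : Phase n → ℝ) (z : Phase n) :
    brU F G z = bivectorU (fderiv ℝ F z) (fderiv ℝ G z) := rfl

lemma brW_eq_bivectorW (F G : Doubled n → ℝ) (w : Doubled n) :
    brW F G w = bivectorW (fderiv ℝ F w) (fderiv ℝ G w) := rfl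

lemma brW_comp_continuousLinearMap (L M : Doubled n →L[ℝ] Phase n) {F G : Phase n → ℝ}
    (w : Doubled n) (hF : DifferentiableAt ℝ F (L w)) (hG : DifferentiableAt ℝ G (M w)) :
    brW (F ∘ L) (G ∘ M) w =
      bivectorW ((fderiv ℝ F (L w)).comp L) ((fderiv ℝ G (M w)).comp M) := by
  rw [brW_eq_bivectorW, fderiv_comp_continuousLinearMap L hF,
    fderiv_comp_continuousLinearMap M hG]

lemma bivectorW_comp_srcMapL (a b : Phase n →L[ℝ] ℝ) :
    bivectorW (a.comp (srcMapL n)) (b.comp (srcMapL n)) = bivectorU a b := by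
  simp only [bivectorW, bivectorU, ← Finset.sum_add_distrib]
  refine Finset.sum_congr rfl fun i _ => ?_
  simp only [ContinuousLinearMap.comp_apply, coe_srcMapL, srcMap,
    smul_zero, add_zero, sub_zero, zero_add, zero_sub, sub_self, ← neg_smul,
    ← Prod.smul_mk_zero, ← Prod.smul_zero_mk, map_smul, smul_eq_mul]
  ring

lemma bivectorW_comp_tgtMapL (a b : Phase n →L[ℝ] ℝ) :
    bivectorW (a.comp (tgtMapL n)) (b.comp (tgtMapL n)) = -bivectorU a b := by
  simp only [bivectorW, bivectorU, ← Finset.sum_add_distrib, ← Finset.sum_neg_distrib]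
  refine Finset.sum_congr rfl fun i _ => ?_
  simp only [ContinuousLinearMap.comp_apply, coe_tgtMapL, tgtMap,
    smul_zero, add_zero, sub_zero, zero_add, zero_sub, sub_self, ← neg_smul,
    ← Prod.smul_mk_zero, ← Prod.smul_zero_mk, map_smul, smul_eq_mul]
  ring

lemma bivectorW_comp_srcMapL_tgtMapL (a b : Phase n →L[ℝ] ℝ) :
    bivectorW (a.comp (srcMapL n)) (b.comp (tgtMapL n)) = 0 := by
  simp only [bivectorW, ← Finset.sum_add_distrib]
  refine Finset.sum_eq_zero fun i _ => ?_
  simp only [ContinuousLinearMap.comp_apply, coe_srcMapL, coe_tgtMapL, srcMap, tgtMap,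
    smul_zero, add_zero, sub_zero, zero_add, zero_sub, sub_self, ← neg_smul,
    ← Prod.smul_mk_zero, ← Prod.smul_zero_mk, map_smul, smul_eq_mul]
  ring

end

theorem symplectic_birealisation_general
    {n : ℕ} :
    ∀ F G : Phase n → ℝ,
      ContDiff ℝ (⊤ : ℕ∞) F → ContDiff ℝ (⊤ : ℕ∞) G →
      ∀ w : Doubled n,
        brW (F ∘ srcMap) (G ∘ srcMap) w = brU F G (srcMap w) ∧
        brW (F ∘ tgtMap) (G ∘ tgtMap) w = -brU F G (tgtMap w) ∧
        brW (F ∘ srcMap) (G ∘ tgtMap) w = 0 := by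
  intro F G hF hG w
  have hF' : Differentiable ℝ F := hF.differentiable (by simp)
  have hG' : Differentiable ℝ G := hG.differentiable (by simp)
  refine ⟨?_, ?_, ?_⟩
  · rw [← coe_srcMapL, brW_comp_continuousLinearMap _ _ w (hF' _) (hG' _),
      bivectorW_comp_srcMapL, brU_eq_bivectorU]
  · rw [← coe_tgtMapL, brW_comp_continuousLinearMap _ _ w (hF' _) (hG' _),
      bivectorW_comp_tgtMapL, brU_eq_bivectorU]
  · rw [← coe_srcMapL, ← coe_tgtMapL, brW_comp_continuousLinearMap _ _ w (hF' _) (hG' _),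
      bivectorW_comp_srcMapL_tgtMapL]

/-- The maps `α(q,p,ξ_q,ξ_p) = (q − ξ_p/2, p + ξ_q/2)` and
`β(q,p,ξ_q,ξ_p) = (q + ξ_p/2, p − ξ_q/2)` from `ℝ^{4n}` (with the bracket
`{q_i,ξ_{q,j}} = {p_i,ξ_{p,j}} = δ_{ij}`) to `ℝ^{2n}` (with the canonical bracket
`{q_i,p_j} = δ_{ij}`) are respectively a Poisson and an anti-Poisson map, and
their pullbacks Poisson-commute. -/
theorem symplectic_birealisation
    {n : ℕ} (hn : 1 ≤ n) :
    ∀ F G : Phase n → ℝ,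
      ContDiff ℝ (⊤ : ℕ∞) F → ContDiff ℝ (⊤ : ℕ∞) G →
      ∀ w : Doubled n,
        brW (F ∘ srcMap) (G ∘ srcMap) w = brU F G (srcMap w) ∧
        brW (F ∘ tgtMap) (G ∘ tgtMap) w = -brU F G (tgtMap w) ∧
        brW (F ∘ srcMap) (G ∘ tgtMap) w = 0 :=
  symplectic_birealisation_general
end

section
/- Let A, x ∈ Mₙ(ℝ) be skew-symmetric matrices. Define α(A,x) := (I + A/4)·x·(I − A/4) and β(A,x) := (I − A/4)·x·(I + A/4), and let ψ(A) := (4·I + A)(4·I − A)^{-1}. Then α(A,x) and β(A,x) are skew-symmetric, and β(A,x) = ψ(A)^{-1}·α(A,x)·ψ(A); i.e. the target of the bi-realisation on so(n) is obtained from its source by the coadjoint action of ψ(A) with respect to the trace pairing. -/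
open Matrix

/-- For skew-symmetric `A, x ∈ Mₙ(ℝ)`, the source
`α(A,x) = (I + A/4)x(I − A/4)` and target `β(A,x) = (I − A/4)x(I + A/4)` of the
bi-realisation on `so(n)` are skew-symmetric, and the target is obtained from the
source by the coadjoint action of the scaled Cayley transform
`ψ(A) = (4I + A)(4I − A)⁻¹`: namely `β(A,x) = ψ(A)⁻¹·α(A,x)·ψ(A)`. -/
theorem so_birealisation_coadjoint
    {n : ℕ} (A x : Matrix (Fin n) (Fin n) ℝ) (hA : Aᵀ = -A) (hx : xᵀ = -x)
    (α β ψ : Matrix (Fin n) (Fin n) ℝ)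
    (hα : α = (1 + (1 / 4 : ℝ) • A) * x * (1 - (1 / 4 : ℝ) • A))
    (hβ : β = (1 - (1 / 4 : ℝ) • A) * x * (1 + (1 / 4 : ℝ) • A))
    (hψ : ψ = ((4 : ℝ) • (1 : Matrix (Fin n) (Fin n) ℝ) + A)
        * ((4 : ℝ) • (1 : Matrix (Fin n) (Fin n) ℝ) - A)⁻¹) :
    αᵀ = -α ∧ βᵀ = -β ∧ β = ψ⁻¹ * α * ψ := by
  set P : Matrix (Fin n) (Fin n) ℝ := (4 : ℝ) • (1 : Matrix (Fin n) (Fin n) ℝ) + A with hP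
  set Q : Matrix (Fin n) (Fin n) ℝ := (4 : ℝ) • (1 : Matrix (Fin n) (Fin n) ℝ) - A with hQ
  have hcA : ((4 : ℝ) • (1 : Matrix (Fin n) (Fin n) ℝ)) * A
      = A * ((4 : ℝ) • (1 : Matrix (Fin n) (Fin n) ℝ)) := by
    rw [smul_mul_assoc, mul_smul_comm, one_mul, mul_one]
  have hc2 : ((4 : ℝ) • (1 : Matrix (Fin n) (Fin n) ℝ)) * ((4 : ℝ) • (1 : Matrix (Fin n) (Fin n) ℝ))
      = (16 : ℝ) • (1 : Matrix (Fin n) (Fin n) ℝ) := by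
    rw [smul_mul_assoc, one_mul, smul_smul]
    norm_num
  -- transposes of P and Q
  have hQt : Qᵀ = P := by
    rw [hQ, hP]
    simp [transpose_sub, transpose_smul, hA, sub_eq_add_neg]
  have hPt : Pᵀ = Q := by
    rw [hQ, hP]
    simp [transpose_add, transpose_smul, hA, sub_eq_add_neg]
  -- commutation of P and Q
  have hPQ : P * Q = Q * P := by
    rw [hP, hQ, add_mul, mul_sub, mul_sub, sub_mul, mul_add, mul_add, hcA]
    abel
  -- scaled forms
  have hαs : α = (1/16 : ℝ) • (P * x * Q) := by
    rw [hα, hP, hQ]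
    simp only [mul_sub, sub_mul, add_mul, mul_add, smul_mul_assoc, mul_smul_comm,
      one_mul, mul_one, smul_add, smul_sub, smul_smul]
    norm_num
  have hβs : β = (1/16 : ℝ) • (Q * x * P) := by
    rw [hβ, hP, hQ]
    simp only [mul_sub, sub_mul, add_mul, mul_add, smul_mul_assoc, mul_smul_comm,
      one_mul, mul_one, smul_add, smul_sub, smul_smul]
    norm_num
  -- skew-symmetry of α and β
  have hαt : αᵀ = -α := by
    rw [hαs, transpose_smul, transpose_mul, transpose_mul, hQt, hPt, hx]
    simp [Matrix.mul_neg, Matrix.neg_mul, smul_neg, Matrix.mul_assoc]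
  have hβt : βᵀ = -β := by
    rw [hβs, transpose_smul, transpose_mul, transpose_mul, hQt, hPt, hx]
    simp [Matrix.mul_neg, Matrix.neg_mul, smul_neg, Matrix.mul_assoc]
  -- Q is invertible: QᵀQ = 16·1 + AᵀA is positive definite
  have key : Qᵀ * Q = (16 : ℝ) • (1 : Matrix (Fin n) (Fin n) ℝ) + Aᵀ * A := by
    rw [hQt, hP, hQ, hA, add_mul, mul_sub, mul_sub, hc2, hcA, neg_mul]
    abel
  have hposQ : (Qᵀ * Q).PosDef := by
    rw [key]
    have h16 : ((16 : ℝ) • (1 : Matrix (Fin n) (Fin n) ℝ)).PosDef := by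
      rw [Matrix.smul_one_eq_diagonal]
      exact Matrix.PosDef.diagonal (fun _ => by norm_num)
    have hAtA : (Aᵀ * A).PosSemidef := by
      have h1 : (Aᴴ * A).PosSemidef := posSemidef_conjTranspose_mul_self A
      have h2 : Aᴴ = Aᵀ := by
        ext i j
        simp [conjTranspose_apply]
      rwa [h2] at h1
    exact h16.add_posSemidef hAtA
  have hdetQ : IsUnit Q.det := by
    have h := hposQ.isUnit
    rw [Matrix.isUnit_iff_isUnit_det, Matrix.det_mul] at h
    exact (IsUnit.mul_iff.mp h).2
  have hdetP : IsUnit P.det := by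
    rw [← hQt, Matrix.det_transpose]; exact hdetQ
  have hQQi : Q * Q⁻¹ = 1 := Matrix.mul_nonsing_inv Q hdetQ
  have hQiQ : Q⁻¹ * Q = 1 := Matrix.nonsing_inv_mul Q hdetQ
  have hPiP : P⁻¹ * P = 1 := Matrix.nonsing_inv_mul P hdetP
  -- key intertwining identity: P * β * Q = Q * α * P
  have hkey : P * β * Q = Q * α * P := by
    rw [hαs, hβs]
    simp only [Matrix.mul_smul, Matrix.smul_mul]
    congr 1
    calc P * (Q * x * P) * Q = (P * Q) * x * (P * Q) := by noncomm_ring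
    _ = (Q * P) * x * (Q * P) := by rw [hPQ]
    _ = Q * (P * x * Q) * P := by noncomm_ring
  -- inverse of ψ
  have hψinv : ψ⁻¹ = Q * P⁻¹ := by
    rw [hψ, Matrix.mul_inv_rev, Matrix.nonsing_inv_nonsing_inv Q hdetQ]
  refine ⟨hαt, hβt, ?_⟩
  rw [hψinv, hψ]
  -- goal: β = Q * P⁻¹ * α * (P * Q⁻¹)
  have h1 : Q * P⁻¹ * α * (P * Q⁻¹) = Q * P⁻¹ * (α * P) * Q⁻¹ := by noncomm_ring
  have hαP : α * P = Q⁻¹ * (P * β * Q) := by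
    rw [hkey]
    have h2 : Q⁻¹ * (Q * α * P) = (Q⁻¹ * Q) * (α * P) := by noncomm_ring
    rw [h2, hQiQ, one_mul]
  rw [h1, hαP]
  refine (calc Q * P⁻¹ * (Q⁻¹ * (P * β * Q)) * Q⁻¹
      = Q * (P⁻¹ * Q⁻¹) * P * β * (Q * Q⁻¹) := by noncomm_ring
    _ = Q * (Q⁻¹ * P⁻¹) * P * β * (Q * Q⁻¹) := by
        rw [← Matrix.mul_inv_rev, ← hPQ, Matrix.mul_inv_rev]
    _ = β := by
        rw [hQQi, mul_one]
        have h3 : Q * (Q⁻¹ * P⁻¹) * P = Q * Q⁻¹ * (P⁻¹ * P) := by noncomm_ring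
        rw [h3, hQQi, hPiP, one_mul, one_mul]).symm
end
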